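/- arXiv:1709.08472 — 4 statements merged into one kernel-verified Lean document; each statement's English description precedes it below -/
import Mathlib

section
/- Let E be a real Banach space, T > 0, and let S be a strongly continuous semigroup on E with M := sup_{t∈[0,T]} ‖S(t)‖_{L(E)} < ∞. Let α ∈ (0,1) and let f : [0,T] → E be strongly measurable and essentially bounded. Then for every t ∈ [0,T] the deterministic factorization formula holds: ∫₀ᵗ S(t−r) f(r) dr = (sin(πα)/π) ∫₀ᵗ (t−s)^{α−1} S(t−s) (∫₀ˢ (s−r)^{−α} S(s−r) f(r) dr) ds, where all integrals are Bochner integrals and both sides are well defined. -/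
/-!
Conjugating by the semigroup law, `S(t-s) ∫₀ˢ (s-r)^(-α) S(s-r) f(r) dr` equals
`∫₀ˢ (s-r)^(-α) S(t-r) f(r) dr`, so the right-hand side is an integral of `S(t-r) f(r)` over the
triangle `0 < r < s < t` against the kernel `(t-s)^(α-1) (s-r)^(-α)`. By Fubini, integrating this
kernel in `s` first gives the Beta integral `B(1-α, α) = Γ(α) Γ(1-α) = π / sin(πα)` for every
`r`. Integrability comes from the boundedness of `S` on `[0,T]` and of `f`, together with the
integrability of the two singularities; joint measurability comes from the joint continuity of
`(t, x) ↦ S t x`, a consequence of the Banach–Steinhaus theorem.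
-/

open MeasureTheory Set Real Filter Topology

section StronglyContinuous

variable {X 𝕜 E F : Type*} [TopologicalSpace X] [NontriviallyNormedField 𝕜]
  [NormedAddCommGroup E] [NormedSpace 𝕜 E] [CompleteSpace E]
  [NormedAddCommGroup F] [NormedSpace 𝕜 F] {S : X → E →L[𝕜] F}

theorem exists_forall_opNorm_le_of_isCompact (hS : ∀ x, Continuous fun t => S t x)
    {K : Set X} (hK : IsCompact K) : ∃ C, ∀ t ∈ K, ‖S t‖ ≤ C := by
  obtain ⟨C, hC⟩ := banach_steinhaus (g := fun t : K => S t) fun x =>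
    let ⟨C, hC⟩ := hK.exists_bound_of_continuousOn (hS x).continuousOn
    ⟨C, fun t => hC t t.2⟩
  exact ⟨C, fun t ht => hC ⟨t, ht⟩⟩

theorem continuous_uncurry_apply_of_continuous_apply [WeaklyLocallyCompactSpace X]
    (hS : ∀ x, Continuous fun t => S t x) : Continuous fun p : X × E => S p.1 p.2 := by
  refine continuous_iff_continuousAt.2 fun ⟨t₀, x₀⟩ => ?_
  obtain ⟨K, hK, hKt₀⟩ := exists_compact_mem_nhds t₀
  obtain ⟨C, hC⟩ := exists_forall_opNorm_le_of_isCompact hS hK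
  rw [ContinuousAt, tendsto_iff_norm_sub_tendsto_zero]
  have hbound : ∀ᶠ p : X × E in 𝓝 (t₀, x₀),
      ‖S p.1 p.2 - S t₀ x₀‖ ≤ C * ‖p.2 - x₀‖ + ‖S p.1 x₀ - S t₀ x₀‖ := by
    filter_upwards [continuous_fst.continuousAt.preimage_mem_nhds hKt₀] with p hp
    calc ‖S p.1 p.2 - S t₀ x₀‖ = ‖S p.1 (p.2 - x₀) + (S p.1 x₀ - S t₀ x₀)‖ := by
          rw [map_sub, sub_add_sub_cancel]
      _ ≤ C * ‖p.2 - x₀‖ + ‖S p.1 x₀ - S t₀ x₀‖ :=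
          norm_add_le_of_le ((S p.1).le_of_opNorm_le (hC _ hp) _) le_rfl
  refine squeeze_zero' (.of_forall fun _ => norm_nonneg _) hbound ?_
  have hlim : Tendsto (fun p : X × E => C * ‖p.2 - x₀‖ + ‖S p.1 x₀ - S t₀ x₀‖)
      (𝓝 (t₀, x₀)) (𝓝 (C * ‖x₀ - x₀‖ + ‖S t₀ x₀ - S t₀ x₀‖)) :=
    ((continuous_const.mul (continuous_snd.sub continuous_const).norm).add
      (((hS x₀).comp continuous_fst).sub continuous_const).norm).tendsto _
  simpa using hlim

end StronglyContinuous

theorem sin_pi_mul_pos {α : ℝ} (hα : α ∈ Ioo (0 : ℝ) 1) : 0 < sin (π * α) :=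
  sin_pos_of_pos_of_lt_pi (mul_pos pi_pos hα.1) (mul_lt_of_lt_one_right pi_pos hα.2)

theorem integral_rpow_neg_mul_one_sub_rpow {α : ℝ} (hα : α ∈ Ioo (0 : ℝ) 1) :
    ∫ u in (0 : ℝ)..1, u ^ (-α) * (1 - u) ^ (α - 1) = π / sin (π * α) := by
  have hbeta := Complex.Gamma_mul_Gamma_eq_betaIntegral (s := ((1 - α : ℝ) : ℂ))
    (t := (α : ℂ)) (by simpa using hα.2) (by simpa using hα.1)
  have hcast : Complex.betaIntegral ((1 - α : ℝ) : ℂ) α =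
      ((∫ u in (0 : ℝ)..1, u ^ (-α) * (1 - u) ^ (α - 1) : ℝ) : ℂ) := by
    rw [Complex.betaIntegral, ← intervalIntegral.integral_ofReal]
    refine intervalIntegral.integral_congr fun u hu => ?_
    rw [uIcc_of_le zero_le_one] at hu
    simp only [Complex.ofReal_mul, Complex.ofReal_cpow hu.1,
      Complex.ofReal_cpow (sub_nonneg.2 hu.2), Complex.ofReal_sub, Complex.ofReal_one,
      Complex.ofReal_neg]
    ring_nf
  rw [hcast, Complex.ofReal_sub, Complex.ofReal_one, sub_add_cancel, Complex.Gamma_one, one_mul,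
    ← Complex.ofReal_one, ← Complex.ofReal_sub, Complex.Gamma_ofReal, Complex.Gamma_ofReal,
    ← Complex.ofReal_mul, Complex.ofReal_inj] at hbeta
  rw [← hbeta, mul_comm, Real.Gamma_mul_Gamma_one_sub]

theorem integral_Ioc_sub_rpow_mul_sub_rpow {α : ℝ} (hα : α ∈ Ioo (0 : ℝ) 1) {r t : ℝ}
    (hrt : r < t) :
    ∫ s in Ioc r t, (t - s) ^ (α - 1) * (s - r) ^ (-α) = π / sin (π * α) := by
  have hpos : 0 < t - r := sub_pos.2 hrt
  have hscale : ∀ u ∈ uIcc (0 : ℝ) 1,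
      (t - ((t - r) * u + r)) ^ (α - 1) * ((t - r) * u + r - r) ^ (-α) =
        (t - r)⁻¹ * (u ^ (-α) * (1 - u) ^ (α - 1)) := by
    intro u hu
    rw [uIcc_of_le zero_le_one] at hu
    rw [show t - ((t - r) * u + r) = (t - r) * (1 - u) by ring, add_sub_cancel_right,
      mul_rpow hpos.le (sub_nonneg.2 hu.2), mul_rpow hpos.le hu.1, ← rpow_neg_one,
      show (-1 : ℝ) = α - 1 + -α by ring, rpow_add hpos]
    ring
  have hsub := intervalIntegral.smul_integral_comp_mul_add
    (fun s => (t - s) ^ (α - 1) * (s - r) ^ (-α)) (t - r) r (a := 0) (b := 1)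
  rw [mul_zero, zero_add, mul_one, sub_add_cancel, intervalIntegral.integral_congr hscale,
    intervalIntegral.integral_const_mul, integral_rpow_neg_mul_one_sub_rpow hα, smul_eq_mul,
    mul_inv_cancel_left₀ hpos.ne'] at hsub
  rw [← intervalIntegral.integral_of_le hrt.le, hsub]

theorem integrableOn_Ioc_sub_rpow {β : ℝ} (hβ : -1 < β) (a b : ℝ) :
    IntegrableOn (fun x => (b - x) ^ β) (Ioc a b) := by
  have h := (intervalIntegral.intervalIntegrable_rpow' hβ (a := 0) (b := b - a)).comp_sub_left b
  rw [sub_zero, sub_sub_cancel] at h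
  exact h.symm.1

theorem ae_restrict_Ioc_mem_Ioo {μ : Measure ℝ} [NullSingletonClass μ] {a b : ℝ} :
    ∀ᵐ x ∂μ.restrict (Ioc a b), x ∈ Ioo a b := by
  rw [← restrict_Ioo_eq_restrict_Ioc]
  exact ae_restrict_mem measurableSet_Ioo

noncomputable def factorizationKernel (α t : ℝ) : ℝ × ℝ → ℝ :=
  {p : ℝ × ℝ | p.2 < p.1}.indicator fun p => (t - p.1) ^ (α - 1) * (p.1 - p.2) ^ (-α)

section FactorizationKernel

variable {α t : ℝ}

theorem measurable_factorizationKernel : Measurable (factorizationKernel α t) :=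
  (by fun_prop : Measurable fun p : ℝ × ℝ => (t - p.1) ^ (α - 1) * (p.1 - p.2) ^ (-α)).indicator
    (measurableSet_lt measurable_snd measurable_fst)

theorem factorizationKernel_nonneg {p : ℝ × ℝ} (hp : p.1 ≤ t) : 0 ≤ factorizationKernel α t p :=
  indicator_apply_nonneg fun hp' => mul_nonneg (rpow_nonneg (sub_nonneg.2 hp) _)
    (rpow_nonneg (sub_nonneg.2 (le_of_lt hp')) _)

theorem integral_factorizationKernel_fst (hα : α ∈ Ioo (0 : ℝ) 1) {r : ℝ} (hr : r ∈ Ioo 0 t) :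
    ∫ s in Ioc 0 t, factorizationKernel α t (s, r) = π / sin (π * α) := by
  change ∫ s in Ioc 0 t, (Ioi r).indicator (fun s => (t - s) ^ (α - 1) * (s - r) ^ (-α)) s = _
  rw [integral_indicator measurableSet_Ioi, Measure.restrict_restrict measurableSet_Ioi,
    inter_comm, Ioc_inter_Ioi, max_eq_right hr.1.le, integral_Ioc_sub_rpow_mul_sub_rpow hα hr.2]

theorem integrableOn_factorizationKernel_fst (hα : α ∈ Ioo (0 : ℝ) 1) {r : ℝ} (hr : r ∈ Ioo 0 t) :
    IntegrableOn (fun s => factorizationKernel α t (s, r)) (Ioc 0 t) := by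
  -- a function that is not integrable has Bochner integral `0`
  refine Integrable.of_integral_ne_zero ?_
  rw [integral_factorizationKernel_fst hα hr]
  exact div_ne_zero pi_ne_zero (sin_pi_mul_pos hα).ne'

variable {E : Type*} [NormedAddCommGroup E] [NormedSpace ℝ E] {φ : ℝ → E}

theorem integral_factorizationKernel_smul_snd {s : ℝ} (hs : s ∈ Ioc 0 t) :
    ∫ r in Ioc 0 t, factorizationKernel α t (s, r) • φ r =
      (t - s) ^ (α - 1) • ∫ r in Ioc 0 s, (s - r) ^ (-α) • φ r := by
  have hslice : (fun r => factorizationKernel α t (s, r) • φ r) =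
      (Iio s).indicator fun r => (t - s) ^ (α - 1) • (s - r) ^ (-α) • φ r := by
    ext r
    simp only [factorizationKernel, indicator_apply, mem_ofPred_eq, mem_Iio, ite_smul, zero_smul,
      mul_smul]
  have hdom : Iio s ∩ Ioc 0 t = Ioo 0 s := by
    ext r
    simp only [mem_inter_iff, mem_Iio, mem_Ioc, mem_Ioo]
    grind
  rw [hslice, integral_indicator measurableSet_Iio, Measure.restrict_restrict measurableSet_Iio,
    hdom, integral_smul, integral_Ioc_eq_integral_Ioo]

theorem integral_factorizationKernel_smul_fst [CompleteSpace E] (hα : α ∈ Ioo (0 : ℝ) 1) {r : ℝ}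
    (hr : r ∈ Ioo 0 t) :
    ∫ s in Ioc 0 t, factorizationKernel α t (s, r) • φ r = (π / sin (π * α)) • φ r := by
  rw [integral_smul_const, integral_factorizationKernel_fst hα hr]

theorem integrable_factorizationKernel_smul (hα : α ∈ Ioo (0 : ℝ) 1)
    (hφ : IntegrableOn φ (Ioc 0 t)) :
    Integrable (fun p : ℝ × ℝ => factorizationKernel α t p • φ p.2)
      ((volume.restrict (Ioc 0 t)).prod (volume.restrict (Ioc 0 t))) := by
  refine (integrable_prod_iff' (measurable_factorizationKernel.aestronglyMeasurable.smul
    hφ.aestronglyMeasurable.comp_snd)).2 ⟨?_, ?_⟩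
  · filter_upwards [ae_restrict_Ioc_mem_Ioo] with r hr
    exact (integrableOn_factorizationKernel_fst hα hr).smul_const (φ r)
  · refine (hφ.norm.const_mul (π / sin (π * α))).congr ?_
    filter_upwards [ae_restrict_Ioc_mem_Ioo] with r hr
    calc π / sin (π * α) * ‖φ r‖ = ∫ s in Ioc 0 t, factorizationKernel α t (s, r) * ‖φ r‖ := by
          rw [integral_mul_const, integral_factorizationKernel_fst hα hr]
      _ = ∫ s in Ioc 0 t, ‖factorizationKernel α t (s, r) • φ r‖ := by
          refine setIntegral_congr_fun measurableSet_Ioc fun s hs => ?_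
          rw [norm_smul, Real.norm_of_nonneg (factorizationKernel_nonneg hs.2)]

theorem integral_sub_rpow_smul_integral_sub_rpow_smul [CompleteSpace E] (hα : α ∈ Ioo (0 : ℝ) 1)
    (hφ : IntegrableOn φ (Ioc 0 t)) :
    IntegrableOn (fun s => (t - s) ^ (α - 1) • ∫ r in Ioc 0 s, (s - r) ^ (-α) • φ r) (Ioc 0 t) ∧
      ∫ s in Ioc 0 t, (t - s) ^ (α - 1) • ∫ r in Ioc 0 s, (s - r) ^ (-α) • φ r =
        (π / sin (π * α)) • ∫ r in Ioc 0 t, φ r := by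
  have hF := integrable_factorizationKernel_smul hα hφ
  have hinner := fun s (hs : s ∈ Ioc 0 t) =>
    integral_factorizationKernel_smul_snd (α := α) (φ := φ) hs
  refine ⟨hF.integral_prod_left.congr ((ae_restrict_mem measurableSet_Ioc).mono hinner), ?_⟩
  calc ∫ s in Ioc 0 t, (t - s) ^ (α - 1) • ∫ r in Ioc 0 s, (s - r) ^ (-α) • φ r
      = ∫ s in Ioc 0 t, ∫ r in Ioc 0 t, factorizationKernel α t (s, r) • φ r :=
        (setIntegral_congr_fun measurableSet_Ioc hinner).symm
    _ = ∫ r in Ioc 0 t, ∫ s in Ioc 0 t, factorizationKernel α t (s, r) • φ r :=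
        integral_integral_swap hF
    _ = ∫ r in Ioc 0 t, (π / sin (π * α)) • φ r := by
        refine integral_congr_ae ?_
        filter_upwards [ae_restrict_Ioc_mem_Ioo] with r hr
        exact integral_factorizationKernel_smul_fst hα hr
    _ = (π / sin (π * α)) • ∫ r in Ioc 0 t, φ r := integral_smul _ _

end FactorizationKernel

theorem ae_norm_apply_sub_le {𝕜 E F : Type*} [NontriviallyNormedField 𝕜]
    [NormedAddCommGroup E] [NormedSpace 𝕜 E] [NormedAddCommGroup F] [NormedSpace 𝕜 F]
    {S : ℝ → E →L[𝕜] F} {T M B c : ℝ}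
    (hM : ∀ t ∈ Icc (0 : ℝ) T, ‖S t‖ ≤ M) {f : ℝ → E}
    (hfB : ∀ᵐ r ∂volume.restrict (Ioc (0 : ℝ) T), ‖f r‖ ≤ B) (hc : c ≤ T) :
    ∀ᵐ r ∂volume.restrict (Ioc (0 : ℝ) c), ‖S (c - r) (f r)‖ ≤ M * B := by
  filter_upwards [ae_restrict_of_ae_restrict_of_subset (Ioc_subset_Ioc_right hc) hfB,
    ae_restrict_mem measurableSet_Ioc] with r hfr hr
  exact (S _).le_of_opNorm_le_of_le (hM _ ⟨sub_nonneg.2 hr.2, by linarith [hr.1]⟩) hfr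

theorem stmt_2_general
    {E : Type*} [NormedAddCommGroup E] [NormedSpace ℝ E] [CompleteSpace E]
    (T : ℝ)
    (S : ℝ → E →L[ℝ] E)
    (hSadd : ∀ s t : ℝ, 0 ≤ s → 0 ≤ t → S (t + s) = (S t).comp (S s))
    (hScont : ∀ x : E, Continuous fun t : ℝ => S t x)
    (M : ℝ) (hM : ∀ t ∈ Icc (0 : ℝ) T, ‖S t‖ ≤ M)
    (α : ℝ) (hα : α ∈ Ioo (0 : ℝ) 1)
    (f : ℝ → E)
    (hf : AEStronglyMeasurable f (volume.restrict (Ioc (0 : ℝ) T)))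
    (B : ℝ) (hfB : ∀ᵐ r ∂volume.restrict (Ioc (0 : ℝ) T), ‖f r‖ ≤ B) :
    ∀ t ∈ Icc (0 : ℝ) T,
      -- the left-hand side is well defined
      IntegrableOn (fun r => S (t - r) (f r)) (Ioc (0 : ℝ) t) ∧
      -- the inner integrals are well defined
      (∀ s ∈ Ioc (0 : ℝ) t,
        IntegrableOn (fun r => (s - r) ^ (-α) • S (s - r) (f r)) (Ioc (0 : ℝ) s)) ∧
      -- the outer integral is well defined
      IntegrableOn (fun s => (t - s) ^ (α - 1) •
          S (t - s) (∫ r in Ioc (0 : ℝ) s, (s - r) ^ (-α) • S (s - r) (f r)))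
        (Ioc (0 : ℝ) t) ∧
      -- the factorization formula
      (∫ r in Ioc (0 : ℝ) t, S (t - r) (f r)) =
        (Real.sin (π * α) / π) •
          ∫ s in Ioc (0 : ℝ) t, (t - s) ^ (α - 1) •
            S (t - s) (∫ r in Ioc (0 : ℝ) s, (s - r) ^ (-α) • S (s - r) (f r)) := by
  intro t ht
  have hS := continuous_uncurry_apply_of_continuous_apply hScont
  have horbit : ∀ c ≤ T, AEStronglyMeasurable (fun r => S (c - r) (f r))
      (volume.restrict (Ioc 0 c)) := fun c hc =>
    hS.comp_aestronglyMeasurable ((continuous_sub_left c).aestronglyMeasurable.prodMk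
      (hf.mono_set (Ioc_subset_Ioc_right hc)))
  have hlhs : IntegrableOn (fun r => S (t - r) (f r)) (Ioc 0 t) :=
    Integrable.of_bound (horbit t ht.2) (M * B) (ae_norm_apply_sub_le hM hfB ht.2)
  have hinner : ∀ s ∈ Ioc (0 : ℝ) t,
      IntegrableOn (fun r => (s - r) ^ (-α) • S (s - r) (f r)) (Ioc 0 s) := fun s hs =>
    (integrableOn_Ioc_sub_rpow (by linarith [hα.2]) 0 s).smul_bdd (M * B)
      (horbit s (hs.2.trans ht.2)) (ae_norm_apply_sub_le hM hfB (hs.2.trans ht.2))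
  have hcomm : ∀ s ∈ Ioc (0 : ℝ) t,
      (t - s) ^ (α - 1) • S (t - s) (∫ r in Ioc 0 s, (s - r) ^ (-α) • S (s - r) (f r)) =
        (t - s) ^ (α - 1) • ∫ r in Ioc 0 s, (s - r) ^ (-α) • S (t - r) (f r) := by
    intro s hs
    rw [← ContinuousLinearMap.integral_comp_comm _ (hinner s hs)]
    congr 1
    refine setIntegral_congr_fun measurableSet_Ioc fun r hr => ?_
    rw [map_smul, ← ContinuousLinearMap.comp_apply,
      ← hSadd _ _ (sub_nonneg.2 hr.2) (sub_nonneg.2 hs.2), sub_add_sub_cancel]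
  obtain ⟨hint, heq⟩ := integral_sub_rpow_smul_integral_sub_rpow_smul hα hlhs
  refine ⟨hlhs, hinner,
    hint.congr ((ae_restrict_mem measurableSet_Ioc).mono fun s hs => (hcomm s hs).symm), ?_⟩
  rw [setIntegral_congr_fun measurableSet_Ioc hcomm, heq, smul_smul,
    div_mul_div_cancel₀ pi_ne_zero, div_self (sin_pi_mul_pos hα).ne', one_smul]

/-- The deterministic factorization formula
`∫₀ᵗ S(t-r) f(r) dr = (sin(πα)/π) ∫₀ᵗ (t-s)^(α-1) S(t-s) (∫₀ˢ (s-r)^(-α) S(s-r) f(r) dr) ds`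
for a strongly continuous semigroup `S` on a Banach space `E`, `α ∈ (0,1)` and
strongly measurable, essentially bounded `f : [0,T] → E`; all Bochner integrals
involved are well defined. -/
theorem stmt_2
    {E : Type*} [NormedAddCommGroup E] [NormedSpace ℝ E] [CompleteSpace E]
    (T : ℝ) (hT : 0 < T)
    (S : ℝ → E →L[ℝ] E)
    (hS0 : S 0 = ContinuousLinearMap.id ℝ E)
    (hSadd : ∀ s t : ℝ, 0 ≤ s → 0 ≤ t → S (t + s) = (S t).comp (S s))
    (hScont : ∀ x : E, Continuous fun t : ℝ => S t x)
    (M : ℝ) (hM : ∀ t ∈ Icc (0 : ℝ) T, ‖S t‖ ≤ M)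
    (α : ℝ) (hα : α ∈ Ioo (0 : ℝ) 1)
    (f : ℝ → E)
    (hf : AEStronglyMeasurable f (volume.restrict (Ioc (0 : ℝ) T)))
    (B : ℝ) (hfB : ∀ᵐ r ∂volume.restrict (Ioc (0 : ℝ) T), ‖f r‖ ≤ B) :
    ∀ t ∈ Icc (0 : ℝ) T,
      -- the left-hand side is well defined
      IntegrableOn (fun r => S (t - r) (f r)) (Ioc (0 : ℝ) t) ∧
      -- the inner integrals are well defined
      (∀ s ∈ Ioc (0 : ℝ) t,
        IntegrableOn (fun r => (s - r) ^ (-α) • S (s - r) (f r)) (Ioc (0 : ℝ) s)) ∧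
      -- the outer integral is well defined
      IntegrableOn (fun s => (t - s) ^ (α - 1) •
          S (t - s) (∫ r in Ioc (0 : ℝ) s, (s - r) ^ (-α) • S (s - r) (f r)))
        (Ioc (0 : ℝ) t) ∧
      -- the factorization formula
      (∫ r in Ioc (0 : ℝ) t, S (t - r) (f r)) =
        (Real.sin (π * α) / π) •
          ∫ s in Ioc (0 : ℝ) t, (t - s) ^ (α - 1) •
            S (t - s) (∫ r in Ioc (0 : ℝ) s, (s - r) ^ (-α) • S (s - r) (f r)) :=
  stmt_2_general T S hSadd hScont M hM α hα f hf B hfB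
end

section
/- Let E be a real Banach space, T > 0, and let S be a strongly continuous semigroup on E with M := sup_{t∈[0,T]} ‖S(t)‖_{L(E)} < ∞. Let F : E → E be continuous and K_F : (0,T) → [0,∞) measurable with ∫₀ᵀ K_F(r) dr < ∞ and ‖S(t)(F(x) − F(y))‖ ≤ K_F(t)‖x − y‖ for all t ∈ (0,T], x, y ∈ E. Fix x₀ ∈ E and define, for a bounded strongly measurable Y : [0,T] → E, the map M(Y)(t) := S(t)x₀ + ∫₀ᵗ S(t−r) F(Y(r)) dr. Then for every u > 0 and all bounded strongly measurable X, Y : [0,T] → E one has ‖M(X) − M(Y)‖_u ≤ (∫₀ᵀ e^{−ur} K_F(r) dr) ‖X − Y‖_u, where ‖Z‖_u := sup_{t∈[0,T]} e^{−ut} ‖Z(t)‖. -/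
open MeasureTheory Set Real TopologicalSpace

/-! The initial datum cancels in `M(X) - M(Y)`. Under the integral, the Lipschitz hypothesis and
`‖X r - Y r‖ ≤ e^{ur} ‖X - Y‖_u` bound the integrand by `K_F(t - r) e^{ur} ‖X - Y‖_u`; after
multiplying by `e^{-ut}` the kernel becomes `e^{-u(t-r)} K_F(t - r)`, and the reflection
`r ↦ t - r` turns its integral over `(0, t]` into `∫₀ᵗ e^{-ur} K_F(r) dr ≤ ∫₀ᵀ e^{-ur} K_F(r) dr`.
The integrands are measurable because `(s, x) ↦ S(s) x` is separately continuous. -/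

theorem MeasureTheory.AEStronglyMeasurable.apply_of_separatelyContinuous {ι α β γ : Type*}
    [TopologicalSpace ι] [MetrizableSpace ι] [SecondCountableTopology ι] [MeasurableSpace ι]
    [OpensMeasurableSpace ι] [TopologicalSpace β] [TopologicalSpace γ] [PseudoMetrizableSpace γ]
    [MeasurableSpace α] {μ : Measure α} {A : ι → β → γ} {τ : α → ι} {g : α → β}
    (hg : AEStronglyMeasurable g μ) (hA_left : ∀ x, Continuous fun i => A i x)
    (hA_right : ∀ i, Continuous (A i)) (hτ : Measurable τ) :
    AEStronglyMeasurable (fun a => A (τ a) (g a)) μ := by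
  have hA : StronglyMeasurable (Function.uncurry fun i a => A i (hg.mk g a)) :=
    stronglyMeasurable_uncurry_of_continuous_of_stronglyMeasurable (fun _ => hA_left _)
      fun i => (hA_right i).comp_stronglyMeasurable hg.stronglyMeasurable_mk
  refine ⟨_, hA.comp_measurable (hτ.prodMk measurable_id), ?_⟩
  filter_upwards [hg.ae_eq_mk] with a ha
  simp [ha]

theorem norm_integral_sub_integral_le {α E : Type*} [MeasurableSpace α] {μ : Measure α}
    [NormedAddCommGroup E] [NormedSpace ℝ E] {f g : α → E} {b : α → ℝ}
    (hf : AEStronglyMeasurable f μ) (hg : AEStronglyMeasurable g μ) (hb : Integrable b μ)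
    (hfg : ∀ᵐ a ∂μ, ‖f a - g a‖ ≤ b a) :
    ‖∫ a, f a ∂μ - ∫ a, g a ∂μ‖ ≤ ∫ a, b a ∂μ := by
  have hdiff : Integrable (fun a => f a - g a) μ := hb.mono' (hf.sub hg) hfg
  by_cases hgi : Integrable g μ
  · have hfi : Integrable f μ := (hdiff.add hgi).congr (.of_forall fun a => sub_add_cancel _ _)
    rw [← integral_sub hfi hgi]
    exact norm_integral_le_of_norm_le hb hfg
  · -- then `f` is not integrable either, and both integrals take the junk value `0`
    have hfi : ¬Integrable f μ := fun hfi =>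
      hgi ((hfi.sub hdiff).congr (.of_forall fun a => sub_sub_cancel _ _))
    rw [integral_undef hfi, integral_undef hgi, sub_zero, norm_zero]
    exact integral_nonneg_of_ae (hfg.mono fun a ha => (norm_nonneg _).trans ha)

section Reflection

variable {E : Type*} [NormedAddCommGroup E] {t : ℝ}

theorem MeasureTheory.IntegrableOn.comp_sub_left_Ioc {f : ℝ → E} (hf : IntegrableOn f (Ioc 0 t))
    (ht : 0 ≤ t) : IntegrableOn (fun r => f (t - r)) (Ioc 0 t) := by
  rw [← intervalIntegrable_iff_integrableOn_Ioc_of_le ht] at hf ⊢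
  simpa using (hf.comp_sub_left t).symm

theorem setIntegral_Ioc_comp_sub_left [NormedSpace ℝ E] (f : ℝ → E) (ht : 0 ≤ t) :
    ∫ r in Ioc 0 t, f (t - r) = ∫ r in Ioc 0 t, f r := by
  simp only [← intervalIntegral.integral_of_le ht, intervalIntegral.integral_comp_sub_left,
    sub_self, sub_zero]

theorem setIntegral_Ioc_comp_sub_mul_exp (K : ℝ → ℝ) (u : ℝ) (ht : 0 ≤ t) :
    ∫ r in Ioc 0 t, K (t - r) * exp (u * r) = exp (u * t) * ∫ r in Ioc 0 t, exp (-u * r) * K r := by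
  have hK : ∀ r, K (t - r) * exp (u * r) = exp (u * t) * (exp (-u * (t - r)) * K (t - r)) := by
    intro r
    rw [← mul_assoc, ← exp_add]
    ring_nf
  simp_rw [hK, integral_const_mul, setIntegral_Ioc_comp_sub_left (fun r => exp (-u * r) * K r) ht]

end Reflection

section MildIntegral

variable {V E G : Type*} [NormedAddCommGroup V] [NormedAddCommGroup E] [NormedAddCommGroup G]
  [NormedSpace ℝ E] [NormedSpace ℝ G] {S : ℝ → E →L[ℝ] G} {F : V → E} {K : ℝ → ℝ} {t : ℝ}
  {X Y : ℝ → V}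

theorem norm_integral_sub_le_of_lipschitz (hS : ∀ x, Continuous fun s => S s x)
    (hF : Continuous F) (hK : ∀ s ∈ Ioc 0 t, 0 ≤ K s)
    (hLip : ∀ s ∈ Ioc 0 t, ∀ x y, ‖S s (F x - F y)‖ ≤ K s * ‖x - y‖)
    (hX : AEStronglyMeasurable X (volume.restrict (Ioc 0 t)))
    (hY : AEStronglyMeasurable Y (volume.restrict (Ioc 0 t))) {g : ℝ → ℝ}
    (hXY : ∀ r ∈ Ioc 0 t, ‖X r - Y r‖ ≤ g r)
    (hg : IntegrableOn (fun r => K (t - r) * g r) (Ioc 0 t)) :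
    ‖(∫ r in Ioc 0 t, S (t - r) (F (X r))) - ∫ r in Ioc 0 t, S (t - r) (F (Y r))‖ ≤
      ∫ r in Ioc 0 t, K (t - r) * g r := by
  have hmeas : ∀ Z : ℝ → V, AEStronglyMeasurable Z (volume.restrict (Ioc 0 t)) →
      AEStronglyMeasurable (fun r => S (t - r) (F (Z r))) (volume.restrict (Ioc 0 t)) :=
    fun Z hZ => (hF.comp_aestronglyMeasurable hZ).apply_of_separatelyContinuous
      (A := fun s x => S s x) hS (fun s => (S s).continuous) (measurable_const.sub measurable_id)
  refine norm_integral_sub_integral_le (hmeas X hX) (hmeas Y hY) hg ?_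
  -- at `r = t` the semigroup is evaluated at `0`, where no Lipschitz bound is assumed
  rw [Measure.restrict_congr_set Ioo_ae_eq_Ioc.symm]
  filter_upwards [ae_restrict_mem measurableSet_Ioo] with r ⟨hr0, hrt⟩
  have hs : t - r ∈ Ioc 0 t := ⟨by linarith, by linarith⟩
  calc ‖S (t - r) (F (X r)) - S (t - r) (F (Y r))‖ = ‖S (t - r) (F (X r) - F (Y r))‖ := by
        rw [map_sub]
    _ ≤ K (t - r) * ‖X r - Y r‖ := hLip _ hs _ _
    _ ≤ K (t - r) * g r := mul_le_mul_of_nonneg_left (hXY r ⟨hr0, hrt.le⟩) (hK _ hs)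

theorem norm_integral_sub_le_exp_mul (hS : ∀ x, Continuous fun s => S s x)
    (hF : Continuous F) (hK : ∀ s ∈ Ioc 0 t, 0 ≤ K s) (hKi : IntegrableOn K (Ioc 0 t))
    (hLip : ∀ s ∈ Ioc 0 t, ∀ x y, ‖S s (F x - F y)‖ ≤ K s * ‖x - y‖)
    (hX : AEStronglyMeasurable X (volume.restrict (Ioc 0 t)))
    (hY : AEStronglyMeasurable Y (volume.restrict (Ioc 0 t))) (ht : 0 ≤ t) {u N : ℝ}
    (hXY : ∀ r ∈ Ioc 0 t, ‖X r - Y r‖ ≤ exp (u * r) * N) :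
    ‖(∫ r in Ioc 0 t, S (t - r) (F (X r))) - ∫ r in Ioc 0 t, S (t - r) (F (Y r))‖ ≤
      exp (u * t) * N * ∫ r in Ioc 0 t, exp (-u * r) * K r := by
  have hint : IntegrableOn (fun r => K (t - r) * (exp (u * r) * N)) (Ioc 0 t) :=
    (hKi.comp_sub_left_Ioc ht).mul_continuousOn_of_subset (by fun_prop) measurableSet_Ioc
      isCompact_Icc Ioc_subset_Icc_self
  calc _ ≤ ∫ r in Ioc 0 t, K (t - r) * (exp (u * r) * N) :=
        norm_integral_sub_le_of_lipschitz hS hF hK hLip hX hY hXY hint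
    _ = exp (u * t) * N * ∫ r in Ioc 0 t, exp (-u * r) * K r := by
        simp_rw [← mul_assoc, integral_mul_const, setIntegral_Ioc_comp_sub_mul_exp K u ht]
        ring

end MildIntegral

theorem setIntegral_Ioc_exp_mul_le {K : ℝ → ℝ} {t T : ℝ} (u : ℝ)
    (hK : ∀ r ∈ Ioc 0 T, 0 ≤ K r) (hKi : IntegrableOn K (Ioc 0 T)) (htT : t ≤ T) :
    ∫ r in Ioc 0 t, exp (-u * r) * K r ≤ ∫ r in Ioc 0 T, exp (-u * r) * K r := by
  refine setIntegral_mono_set ?_ ?_ (Ioc_subset_Ioc_right htT).eventuallyLE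
  · exact IntegrableOn.continuousOn_mul_of_subset (by fun_prop) hKi isCompact_Icc
      measurableSet_Ioc Ioc_subset_Icc_self
  · filter_upwards [ae_restrict_mem measurableSet_Ioc] with r hr
    have := hK r hr
    positivity

namespace Real

variable {β : Type*} {f : β → ℝ} {s : Set β}

theorem le_biSup_of_forall_le {B : ℝ} (hB : ∀ x ∈ s, f x ≤ B) {x : β} (hx : x ∈ s) :
    f x ≤ ⨆ y ∈ s, f y :=
  le_ciSup₂ (f := fun y (_ : y ∈ s) => f y) ⟨B, by
    simp only [upperBounds, mem_iUnion, mem_range]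
    rintro _ ⟨y, hy, rfl⟩
    exact hB y hy⟩ x hx

theorem biSup_nonneg (hf : ∀ x ∈ s, 0 ≤ f x) : 0 ≤ ⨆ x ∈ s, f x :=
  Real.iSup_nonneg fun x => Real.iSup_nonneg fun hx => hf x hx

theorem biSup_le {B : ℝ} (hf : ∀ x ∈ s, f x ≤ B) (hB : 0 ≤ B) : ⨆ x ∈ s, f x ≤ B :=
  Real.iSup_le (fun x => Real.iSup_le (fun hx => hf x hx) hB) hB

end Real

theorem norm_le_exp_mul_biSup {E : Type*} [NormedAddCommGroup E] {T u B : ℝ} {Z : ℝ → E}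
    (hZ : ∀ t ∈ Icc 0 T, ‖Z t‖ ≤ B) {r : ℝ} (hr : r ∈ Icc 0 T) :
    ‖Z r‖ ≤ exp (u * r) * ⨆ t ∈ Icc 0 T, exp (-u * t) * ‖Z t‖ := by
  have hbdd : ∀ t ∈ Icc 0 T, exp (-u * t) * ‖Z t‖ ≤ exp (|u| * T) * B := fun t ht => by
    have hexp : -u * t ≤ |u| * T :=
      calc -u * t ≤ |u| * t := by gcongr; exacts [ht.1, neg_le_abs u]
        _ ≤ |u| * T := by gcongr; exact ht.2
    exact mul_le_mul (exp_le_exp.2 hexp) (hZ t ht) (norm_nonneg _) (exp_pos _).le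
  have := Real.le_biSup_of_forall_le hbdd hr
  rwa [neg_mul, exp_neg, inv_mul_le_iff₀ (exp_pos _)] at this

theorem stmt_5_general
    {E : Type*} [NormedAddCommGroup E] [NormedSpace ℝ E]
    (T : ℝ)
    (S : ℝ → E →L[ℝ] E)
    (hScont : ∀ x : E, Continuous fun t : ℝ => S t x)
    (F : E → E) (hF : Continuous F)
    (K_F : ℝ → ℝ)
    (hKFnn : ∀ r ∈ Ioc (0 : ℝ) T, 0 ≤ K_F r)
    (hKFi : IntegrableOn K_F (Ioc (0 : ℝ) T))
    (hLip : ∀ t ∈ Ioc (0 : ℝ) T, ∀ x y : E, ‖S t (F x - F y)‖ ≤ K_F t * ‖x - y‖)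
    (x₀ : E) (u : ℝ)
    (X Y : ℝ → E)
    (hXm : AEStronglyMeasurable X (volume.restrict (Ioc (0 : ℝ) T)))
    (hYm : AEStronglyMeasurable Y (volume.restrict (Ioc (0 : ℝ) T)))
    (BX : ℝ) (hXb : ∀ t ∈ Icc (0 : ℝ) T, ‖X t‖ ≤ BX)
    (BY : ℝ) (hYb : ∀ t ∈ Icc (0 : ℝ) T, ‖Y t‖ ≤ BY) :
    (⨆ t ∈ Icc (0 : ℝ) T, Real.exp (-u * t) *
        ‖(S t x₀ + ∫ r in Ioc (0 : ℝ) t, S (t - r) (F (X r))) -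
          (S t x₀ + ∫ r in Ioc (0 : ℝ) t, S (t - r) (F (Y r)))‖) ≤
      (∫ r in Ioc (0 : ℝ) T, Real.exp (-u * r) * K_F r) *
        ⨆ t ∈ Icc (0 : ℝ) T, Real.exp (-u * t) * ‖X t - Y t‖ := by
  set N := ⨆ t ∈ Icc (0 : ℝ) T, exp (-u * t) * ‖X t - Y t‖
  set C := ∫ r in Ioc (0 : ℝ) T, exp (-u * r) * K_F r
  have hN : 0 ≤ N := Real.biSup_nonneg fun t _ => by positivity
  have hC : 0 ≤ C := setIntegral_nonneg measurableSet_Ioc fun r hr => by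
    have := hKFnn r hr
    positivity
  refine Real.biSup_le (fun t ⟨ht0, htT⟩ => ?_) (mul_nonneg hC hN)
  have hsub : Ioc 0 t ⊆ Ioc 0 T := Ioc_subset_Ioc_right htT
  have hXY : ∀ r ∈ Ioc 0 t, ‖X r - Y r‖ ≤ exp (u * r) * N := fun r hr =>
    norm_le_exp_mul_biSup (Z := fun t => X t - Y t)
      (fun t ht => (norm_sub_le _ _).trans (add_le_add (hXb t ht) (hYb t ht)))
      (Ioc_subset_Icc_self.trans (Icc_subset_Icc_right htT) hr)
  have hdiff := norm_integral_sub_le_exp_mul hScont hF (fun s hs => hKFnn s (hsub hs))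
    (hKFi.mono_set hsub) (fun s hs => hLip s (hsub hs))
    (hXm.mono_measure (Measure.restrict_mono hsub le_rfl))
    (hYm.mono_measure (Measure.restrict_mono hsub le_rfl)) ht0 hXY
  rw [add_sub_add_left_eq_sub]
  calc exp (-u * t) * ‖(∫ r in Ioc 0 t, S (t - r) (F (X r))) - ∫ r in Ioc 0 t, S (t - r) (F (Y r))‖
      ≤ exp (-u * t) * (exp (u * t) * N * ∫ r in Ioc 0 t, exp (-u * r) * K_F r) := by gcongr
    _ = N * ∫ r in Ioc 0 t, exp (-u * r) * K_F r := by
        rw [← mul_assoc, ← mul_assoc, ← exp_add, neg_mul, neg_add_cancel, exp_zero, one_mul]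
    _ ≤ N * C := by gcongr; exact setIntegral_Ioc_exp_mul_le u hKFnn hKFi htT
    _ = C * N := mul_comm _ _

/-- The mild-solution map
`M(Y)(t) = S(t)x₀ + ∫₀ᵗ S(t-r) F(Y(r)) dr` is Lipschitz, with constant
`∫₀ᵀ e^(-ur) K_F(r) dr`, with respect to the exponentially weighted supremum
norm `‖Z‖_u = sup_{t∈[0,T]} e^(-ut) ‖Z(t)‖`. -/
theorem stmt_5
    {E : Type*} [NormedAddCommGroup E] [NormedSpace ℝ E] [CompleteSpace E]
    (T : ℝ) (hT : 0 < T)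
    (S : ℝ → E →L[ℝ] E)
    (hS0 : S 0 = ContinuousLinearMap.id ℝ E)
    (hSadd : ∀ s t : ℝ, 0 ≤ s → 0 ≤ t → S (t + s) = (S t).comp (S s))
    (hScont : ∀ x : E, Continuous fun t : ℝ => S t x)
    (M : ℝ) (hM : ∀ t ∈ Icc (0 : ℝ) T, ‖S t‖ ≤ M)
    (F : E → E) (hF : Continuous F)
    (K_F : ℝ → ℝ) (hKFm : Measurable K_F)
    (hKFnn : ∀ r ∈ Ioc (0 : ℝ) T, 0 ≤ K_F r)
    (hKFi : IntegrableOn K_F (Ioc (0 : ℝ) T))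
    (hLip : ∀ t ∈ Ioc (0 : ℝ) T, ∀ x y : E, ‖S t (F x - F y)‖ ≤ K_F t * ‖x - y‖)
    (x₀ : E) (u : ℝ) (hu : 0 < u)
    (X Y : ℝ → E)
    (hXm : AEStronglyMeasurable X (volume.restrict (Ioc (0 : ℝ) T)))
    (hYm : AEStronglyMeasurable Y (volume.restrict (Ioc (0 : ℝ) T)))
    (BX : ℝ) (hXb : ∀ t ∈ Icc (0 : ℝ) T, ‖X t‖ ≤ BX)
    (BY : ℝ) (hYb : ∀ t ∈ Icc (0 : ℝ) T, ‖Y t‖ ≤ BY) :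
    (⨆ t ∈ Icc (0 : ℝ) T, Real.exp (-u * t) *
        ‖(S t x₀ + ∫ r in Ioc (0 : ℝ) t, S (t - r) (F (X r))) -
          (S t x₀ + ∫ r in Ioc (0 : ℝ) t, S (t - r) (F (Y r)))‖) ≤
      (∫ r in Ioc (0 : ℝ) T, Real.exp (-u * r) * K_F r) *
        ⨆ t ∈ Icc (0 : ℝ) T, Real.exp (-u * t) * ‖X t - Y t‖ :=
  stmt_5_general T S hScont F hF K_F hKFnn hKFi hLip x₀ u X Y hXm hYm BX hXb BY hYb
end

section
/- Let E be a real Banach space, T > 0, and let S be a strongly continuous semigroup on E with M := sup_{t∈[0,T]} ‖S(t)‖_{L(E)} < ∞. Let F : E → E be continuous and K_{F,0} : (0,T) → [0,∞) measurable with ∫₀ᵀ K_{F,0}(r) dr < ∞ and ‖S(t)F(z)‖ ≤ K_{F,0}(t)(1 + ‖z‖) for all t ∈ (0,T] and z ∈ E. Then for every bounded strongly measurable Y : [0,T] → E, the deterministic convolution t ↦ ∫₀ᵗ S(t−r) F(Y(r)) dr is a continuous function from [0,T] to E. -/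
/-!
Cutting off the last stretch `(t - ε, t]` of the time interval and writing
`S (t - r) = S (t - ε - r) ∘ S ε` turns the rest of the convolution into the convolution of `S`
with the forcing `r ↦ S ε (F (Y r))`, evaluated at `t - ε`. That forcing is bounded, by
`K_F0 ε * (1 + B)`, so this convolution is continuous by dominated convergence. The cut-off piece
is bounded by `(1 + B) ∫₀^ε K_F0` uniformly in `t`, so the convolution is a uniform limit of
continuous functions as `ε → 0⁺`.
-/

open MeasureTheory Set Real

open Filter Topology

theorem continuous_apply_of_forall_norm_le {X E F : Type*} [TopologicalSpace X]
    [SeminormedAddCommGroup E] [NormedSpace ℝ E] [SeminormedAddCommGroup F] [NormedSpace ℝ F]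
    {S : X → E →L[ℝ] F} {M : ℝ} (hS : ∀ x, Continuous fun t => S t x) (hM : ∀ t, ‖S t‖ ≤ M) :
    Continuous fun p : X × E => S p.1 p.2 := by
  refine continuous_iff_continuousAt.2 fun ⟨t₀, x₀⟩ => ?_
  have hsmall : Tendsto (fun p : X × E => S p.1 (p.2 - x₀)) (𝓝 (t₀, x₀)) (𝓝 0) := by
    refine squeeze_zero_norm (fun p => ((S p.1).le_opNorm _).trans
      (mul_le_mul_of_nonneg_right (hM p.1) (norm_nonneg _))) ?_
    have hcont : Continuous fun p : X × E => M * ‖p.2 - x₀‖ := by fun_prop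
    simpa using hcont.tendsto (t₀, x₀)
  have hfixed : Tendsto (fun p : X × E => S p.1 x₀) (𝓝 (t₀, x₀)) (𝓝 (S t₀ x₀)) :=
    ((hS x₀).comp continuous_fst).tendsto _
  simpa [ContinuousAt] using hsmall.add hfixed

theorem continuousAt_indicator_Iic_apply {E : Type*} [TopologicalSpace E] [Zero E]
    {g : ℝ → ℝ → E} {r t₀ : ℝ}
    (hg : ContinuousAt (fun t => g t r) t₀) (hr : r ≠ t₀) :
    ContinuousAt (fun t => (Iic t).indicator (g t) r) t₀ := by
  rcases hr.lt_or_gt with hlt | hgt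
  · refine hg.congr ?_
    filter_upwards [Ioi_mem_nhds hlt] with t (ht : r < t)
    rw [indicator_of_mem (show r ∈ Iic t from ht.le)]
  · refine (continuousAt_const (y := (0 : E))).congr ?_
    filter_upwards [Iio_mem_nhds hgt] with t (ht : t < r)
    rw [indicator_of_notMem (show r ∉ Iic t from not_le.2 ht)]

section SemigroupConv

variable {E : Type*} [NormedAddCommGroup E] [NormedSpace ℝ E]

noncomputable def semigroupConv (S : ℝ → E →L[ℝ] E) (W : ℝ → E) (t : ℝ) : E :=
  ∫ r in Ioc 0 t, S (t - r) (W r)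

variable {S : ℝ → E →L[ℝ] E} {W : ℝ → E} {K : ℝ → ℝ} {T M C : ℝ}

theorem aestronglyMeasurable_apply_sub (hT : 0 ≤ T) (hS : ∀ x, Continuous fun t => S t x)
    (hM : ∀ t ∈ Icc 0 T, ‖S t‖ ≤ M)
    (hW : AEStronglyMeasurable W (volume.restrict (Ioc 0 T))) {t : ℝ} (ht : t ≤ T) :
    AEStronglyMeasurable (fun r => S (t - r) (W r)) (volume.restrict (Ioc 0 t)) := by
  -- clamping time to `[0, T]` bounds the family everywhere and does not change it where it is used
  have hjoint : Continuous fun p : ℝ × E => S (projIcc 0 T hT p.1) p.2 :=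
    continuous_apply_of_forall_norm_le
      (fun x => (hS x).comp (continuous_subtype_val.comp continuous_projIcc))
      (fun s => hM _ (projIcc 0 T hT s).2)
  have hW' := hW.mono_measure (Measure.restrict_mono (Ioc_subset_Ioc_right ht) le_rfl)
  have hpair : AEStronglyMeasurable (fun r => (t - r, W r)) (volume.restrict (Ioc 0 t)) :=
    (continuous_sub_left t).aestronglyMeasurable.prodMk hW'
  refine (hjoint.comp_aestronglyMeasurable hpair).congr ?_
  filter_upwards [ae_restrict_mem measurableSet_Ioc] with r hr
  simp [projIcc_of_mem hT (show t - r ∈ Icc 0 T from ⟨by linarith [hr.2], by linarith [hr.1]⟩)]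

theorem continuousOn_semigroupConv_of_norm_le (hT : 0 < T) (hS : ∀ x, Continuous fun t => S t x)
    (hM : ∀ t ∈ Icc 0 T, ‖S t‖ ≤ M)
    (hW : AEStronglyMeasurable W (volume.restrict (Ioc 0 T)))
    (hWC : ∀ r ∈ Ioc 0 T, ‖W r‖ ≤ C) :
    ContinuousOn (semigroupConv S W) (Iic T) := by
  -- on the fixed domain `Ioc 0 T` the integrand jumps only at `r = t`, a null set
  set G : ℝ → ℝ → E := fun t => (Iic t).indicator fun r => S (t - r) (W r)
  have hG : EqOn (semigroupConv S W) (fun t => ∫ r in Ioc 0 T, G t r) (Iic T) := fun t ht => by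
    simp only [G, semigroupConv]
    rw [setIntegral_indicator measurableSet_Iic, Ioc_inter_Iic, min_eq_right ht]
  have hM0 : 0 ≤ M := (norm_nonneg _).trans (hM 0 ⟨le_rfl, hT.le⟩)
  have hC0 : 0 ≤ C := (norm_nonneg _).trans (hWC T ⟨hT, le_rfl⟩)
  intro t₀ ht₀
  refine ContinuousWithinAt.congr ?_ hG (hG ht₀)
  refine continuousWithinAt_of_dominated (bound := fun _ => M * C) ?_ ?_ ?_ ?_
  · filter_upwards [self_mem_nhdsWithin] with t (ht : t ≤ T)
    rw [aestronglyMeasurable_indicator_iff measurableSet_Iic, Measure.restrict_restrict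
      measurableSet_Iic, Iic_inter_Ioc_of_le ht]
    exact aestronglyMeasurable_apply_sub hT.le hS hM hW ht
  · filter_upwards [self_mem_nhdsWithin] with t (ht : t ≤ T)
    filter_upwards [ae_restrict_mem measurableSet_Ioc] with r hr
    by_cases hrt : r ≤ t
    · simp only [G, indicator_of_mem (show r ∈ Iic t from hrt)]
      calc ‖S (t - r) (W r)‖ ≤ ‖S (t - r)‖ * ‖W r‖ := (S _).le_opNorm _
        _ ≤ M * C := mul_le_mul (hM _ ⟨by linarith, by linarith [hr.1]⟩) (hWC r hr)
            (norm_nonneg _) hM0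
    · simp only [G, indicator_of_notMem (show r ∉ Iic t from hrt), norm_zero]
      positivity
  · exact integrableOn_const measure_Ioc_lt_top.ne
  · filter_upwards [ae_restrict_of_ae (Measure.ae_ne volume t₀)] with r hr
    exact (continuousAt_indicator_Iic_apply
      ((hS (W r)).comp (continuous_sub_right r)).continuousAt hr).continuousWithinAt

theorem integrableOn_comp_sub_left_Ioc (hK : IntegrableOn K (Ioc 0 T)) {a t : ℝ} (ha : 0 ≤ a)
    (hat : a ≤ t) (ht : t ≤ T) : IntegrableOn (fun r => K (t - r)) (Ioc a t) := by
  have hK' : IntervalIntegrable K volume 0 (t - a) :=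
    (intervalIntegrable_iff_integrableOn_Ioc_of_le (by linarith)).2
      (hK.mono_set (Ioc_subset_Ioc_right (by linarith)))
  have h := (hK'.comp_sub_left t).symm
  rw [sub_zero, sub_sub_cancel, intervalIntegrable_iff_integrableOn_Ioc_of_le hat] at h
  exact h

theorem ae_norm_apply_sub_le_s6 (hWK : ∀ s ∈ Ioc 0 T, ∀ r ∈ Ioc 0 T, ‖S s (W r)‖ ≤ K s * C)
    {a t : ℝ} (ha : 0 ≤ a) (ht : t ≤ T) :
    ∀ᵐ r ∂volume.restrict (Ioc a t), ‖S (t - r) (W r)‖ ≤ K (t - r) * C := by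
  filter_upwards [ae_restrict_mem measurableSet_Ioc, ae_restrict_of_ae (Measure.ae_ne volume t)]
    with r hr hrt
  exact hWK _ ⟨sub_pos.2 (lt_of_le_of_ne hr.2 hrt), by linarith [hr.1]⟩ r
    ⟨by linarith [hr.1], hr.2.trans ht⟩

theorem norm_setIntegral_Ioc_apply_sub_le (hK : IntegrableOn K (Ioc 0 T))
    (hWK : ∀ s ∈ Ioc 0 T, ∀ r ∈ Ioc 0 T, ‖S s (W r)‖ ≤ K s * C) {a t : ℝ} (ha : 0 ≤ a)
    (hat : a ≤ t) (ht : t ≤ T) :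
    ‖∫ r in Ioc a t, S (t - r) (W r)‖ ≤ C * ∫ s in Ioc 0 (t - a), K s := by
  calc ‖∫ r in Ioc a t, S (t - r) (W r)‖ ≤ ∫ r in Ioc a t, K (t - r) * C :=
        norm_integral_le_of_norm_le ((integrableOn_comp_sub_left_Ioc hK ha hat ht).mul_const C)
          (ae_norm_apply_sub_le_s6 hWK ha ht)
    _ = C * ∫ s in Ioc 0 (t - a), K s := by
      rw [integral_mul_const, mul_comm, ← intervalIntegral.integral_of_le hat,
        intervalIntegral.integral_comp_sub_left, sub_self,
        intervalIntegral.integral_of_le (sub_nonneg.2 hat)]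

theorem semigroupConv_eq_add_setIntegral_Ioc
    (hSadd : ∀ s t : ℝ, 0 ≤ s → 0 ≤ t → S (t + s) = (S t).comp (S s)) {ε t : ℝ} (hε : 0 ≤ ε)
    (hεt : ε ≤ t) (hint : IntegrableOn (fun r => S (t - r) (W r)) (Ioc 0 t)) :
    semigroupConv S W t =
      semigroupConv S (fun r => S ε (W r)) (t - ε) + ∫ r in Ioc (t - ε) t, S (t - r) (W r) := by
  rw [semigroupConv, ← Ioc_union_Ioc_eq_Ioc (sub_nonneg.2 hεt) (sub_le_self t hε),
    setIntegral_union (Ioc_disjoint_Ioc_of_le le_rfl) measurableSet_Ioc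
      (hint.mono_set (Ioc_subset_Ioc_right (sub_le_self t hε)))
      (hint.mono_set (Ioc_subset_Ioc_left (sub_nonneg.2 hεt)))]
  congr 1
  refine setIntegral_congr_fun measurableSet_Ioc fun r hr => ?_
  have hsplit : t - r = (t - ε - r) + ε := by ring
  simp only [hsplit, hSadd ε (t - ε - r) hε (by linarith [hr.2]), ContinuousLinearMap.comp_apply]

theorem norm_semigroupConv_sub_shift_le (hT : 0 ≤ T) (hS : ∀ x, Continuous fun t => S t x)
    (hM : ∀ t ∈ Icc 0 T, ‖S t‖ ≤ M)
    (hSadd : ∀ s t : ℝ, 0 ≤ s → 0 ≤ t → S (t + s) = (S t).comp (S s))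
    (hK : IntegrableOn K (Ioc 0 T)) (hK0 : ∀ s ∈ Ioc 0 T, 0 ≤ K s)
    (hW : AEStronglyMeasurable W (volume.restrict (Ioc 0 T)))
    (hWK : ∀ s ∈ Ioc 0 T, ∀ r ∈ Ioc 0 T, ‖S s (W r)‖ ≤ K s * C) (hC : 0 ≤ C)
    {ε t : ℝ} (hε : ε ∈ Ioc 0 T) (ht : t ∈ Icc 0 T) :
    ‖semigroupConv S W t - semigroupConv S (fun r => S ε (W r)) (t - ε)‖ ≤
      C * ∫ s in Ioc 0 ε, K s := by
  rcases le_or_gt ε t with hεt | htε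
  · have hint : IntegrableOn (fun r => S (t - r) (W r)) (Ioc 0 t) := by
      refine Integrable.mono' ((integrableOn_comp_sub_left_Ioc hK le_rfl ht.1 ht.2).mul_const C)
        (aestronglyMeasurable_apply_sub hT hS hM hW ht.2) (ae_norm_apply_sub_le_s6 hWK le_rfl ht.2)
    rw [semigroupConv_eq_add_setIntegral_Ioc hSadd hε.1.le hεt hint, add_sub_cancel_left]
    simpa using norm_setIntegral_Ioc_apply_sub_le hK hWK (sub_nonneg.2 hεt) (sub_le_self t hε.1.le)
      ht.2
  · have hzero : semigroupConv S (fun r => S ε (W r)) (t - ε) = 0 := by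
      simp [semigroupConv, Ioc_eq_empty (not_lt.2 (sub_nonpos.2 htε.le))]
    rw [hzero, sub_zero]
    calc ‖semigroupConv S W t‖ ≤ C * ∫ s in Ioc 0 (t - 0), K s :=
          norm_setIntegral_Ioc_apply_sub_le hK hWK le_rfl ht.1 ht.2
      _ ≤ C * ∫ s in Ioc 0 ε, K s := by
        rw [sub_zero]
        refine mul_le_mul_of_nonneg_left (setIntegral_mono_set (hK.mono_set
          (Ioc_subset_Ioc_right hε.2)) ?_ (Ioc_subset_Ioc_right htε.le).eventuallyLE) hC
        filter_upwards [ae_restrict_mem measurableSet_Ioc] with s hs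
        exact hK0 s ⟨hs.1, hs.2.trans hε.2⟩

theorem tendsto_setIntegral_Ioc_zero_nhdsGT (hT : 0 < T) (hK : IntegrableOn K (Ioc 0 T)) :
    Tendsto (fun ε => ∫ s in Ioc 0 ε, K s) (𝓝[>] 0) (𝓝 0) := by
  have hcont := intervalIntegral.continuousOn_primitive
    (integrableOn_Icc_iff_integrableOn_Ioc (by finiteness) |>.2 hK) 0 (left_mem_Icc.2 hT.le)
  simpa using (hcont.mono_of_mem_nhdsWithin (Icc_mem_nhdsGT hT)).tendsto

theorem tendstoUniformlyOn_semigroupConv_shift (hT : 0 < T)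
    (hS : ∀ x, Continuous fun t => S t x) (hM : ∀ t ∈ Icc 0 T, ‖S t‖ ≤ M)
    (hSadd : ∀ s t : ℝ, 0 ≤ s → 0 ≤ t → S (t + s) = (S t).comp (S s))
    (hK : IntegrableOn K (Ioc 0 T)) (hK0 : ∀ s ∈ Ioc 0 T, 0 ≤ K s)
    (hW : AEStronglyMeasurable W (volume.restrict (Ioc 0 T)))
    (hWK : ∀ s ∈ Ioc 0 T, ∀ r ∈ Ioc 0 T, ‖S s (W r)‖ ≤ K s * C) (hC : 0 ≤ C) :
    TendstoUniformlyOn (fun ε t => semigroupConv S (fun r => S ε (W r)) (t - ε))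
      (semigroupConv S W) (𝓝[>] 0) (Icc 0 T) := by
  refine Metric.tendstoUniformlyOn_iff.2 fun δ hδ => ?_
  have hsmall : ∀ᶠ ε in 𝓝[>] (0 : ℝ), C * ∫ s in Ioc 0 ε, K s < δ := by
    refine ((tendsto_setIntegral_Ioc_zero_nhdsGT hT hK).const_mul C).eventually (gt_mem_nhds ?_)
    simpa using hδ
  filter_upwards [Ioc_mem_nhdsGT hT, hsmall] with ε hε hsmall t ht
  rw [dist_eq_norm]
  exact (norm_semigroupConv_sub_shift_le hT.le hS hM hSadd hK hK0 hW hWK hC hε ht).trans_lt hsmall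

theorem continuousOn_semigroupConv (hT : 0 < T) (hS : ∀ x, Continuous fun t => S t x)
    (hM : ∀ t ∈ Icc 0 T, ‖S t‖ ≤ M)
    (hSadd : ∀ s t : ℝ, 0 ≤ s → 0 ≤ t → S (t + s) = (S t).comp (S s))
    (hK : IntegrableOn K (Ioc 0 T)) (hK0 : ∀ s ∈ Ioc 0 T, 0 ≤ K s)
    (hW : AEStronglyMeasurable W (volume.restrict (Ioc 0 T)))
    (hWK : ∀ s ∈ Ioc 0 T, ∀ r ∈ Ioc 0 T, ‖S s (W r)‖ ≤ K s * C) (hC : 0 ≤ C) :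
    ContinuousOn (semigroupConv S W) (Icc 0 T) := by
  have hshift : ∀ ε ∈ Ioc 0 T,
      ContinuousOn (fun t => semigroupConv S (fun r => S ε (W r)) (t - ε)) (Icc 0 T) :=
    fun ε hε => (continuousOn_semigroupConv_of_norm_le hT hS hM
      ((S ε).continuous.comp_aestronglyMeasurable hW) (hWK ε hε)).comp
        (continuousOn_id.sub continuousOn_const) fun t ht => show t - ε ≤ T by linarith [ht.2, hε.1]
  exact (tendstoUniformlyOn_semigroupConv_shift hT hS hM hSadd hK hK0 hW hWK hC).continuousOn
    (Filter.Eventually.frequently (Filter.mem_of_superset (Ioc_mem_nhdsGT hT) hshift))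

end SemigroupConv

theorem stmt_6_general
    {E : Type*} [NormedAddCommGroup E] [NormedSpace ℝ E]
    (T : ℝ) (hT : 0 < T)
    (S : ℝ → E →L[ℝ] E)
    (hSadd : ∀ s t : ℝ, 0 ≤ s → 0 ≤ t → S (t + s) = (S t).comp (S s))
    (hScont : ∀ x : E, Continuous fun t : ℝ => S t x)
    (M : ℝ) (hM : ∀ t ∈ Icc (0 : ℝ) T, ‖S t‖ ≤ M)
    (F : E → E) (hF : Continuous F)
    (K_F0 : ℝ → ℝ)
    (hKF0nn : ∀ r ∈ Ioc (0 : ℝ) T, 0 ≤ K_F0 r)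
    (hKF0i : IntegrableOn K_F0 (Ioc (0 : ℝ) T))
    (hGrow : ∀ t ∈ Ioc (0 : ℝ) T, ∀ z : E, ‖S t (F z)‖ ≤ K_F0 t * (1 + ‖z‖))
    (Y : ℝ → E)
    (hYm : AEStronglyMeasurable Y (volume.restrict (Ioc (0 : ℝ) T)))
    (B : ℝ) (hYb : ∀ t ∈ Icc (0 : ℝ) T, ‖Y t‖ ≤ B) :
    ContinuousOn (fun t : ℝ => ∫ r in Ioc (0 : ℝ) t, S (t - r) (F (Y r)))
      (Icc (0 : ℝ) T) := by
  have hB : 0 ≤ B := (norm_nonneg _).trans (hYb 0 ⟨le_rfl, hT.le⟩)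
  have hGrowY : ∀ s ∈ Ioc 0 T, ∀ r ∈ Ioc 0 T, ‖S s (F (Y r))‖ ≤ K_F0 s * (1 + B) :=
    fun s hs r hr => (hGrow s hs (Y r)).trans <| mul_le_mul_of_nonneg_left
      (by linarith [hYb r (Ioc_subset_Icc_self hr)]) (hKF0nn s hs)
  exact continuousOn_semigroupConv hT hScont hM hSadd hKF0i hKF0nn
    (hF.comp_aestronglyMeasurable hYm) hGrowY (by linarith)

/-- For a bounded strongly measurable `Y : [0,T] → E`, the
deterministic convolution `t ↦ ∫₀ᵗ S(t-r) F(Y(r)) dr` is continuous from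
`[0,T]` to `E`, under the integrated linear-growth condition on `F`. -/
theorem stmt_6
    {E : Type*} [NormedAddCommGroup E] [NormedSpace ℝ E] [CompleteSpace E]
    (T : ℝ) (hT : 0 < T)
    (S : ℝ → E →L[ℝ] E)
    (hS0 : S 0 = ContinuousLinearMap.id ℝ E)
    (hSadd : ∀ s t : ℝ, 0 ≤ s → 0 ≤ t → S (t + s) = (S t).comp (S s))
    (hScont : ∀ x : E, Continuous fun t : ℝ => S t x)
    (M : ℝ) (hM : ∀ t ∈ Icc (0 : ℝ) T, ‖S t‖ ≤ M)
    (F : E → E) (hF : Continuous F)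
    (K_F0 : ℝ → ℝ) (hKF0m : Measurable K_F0)
    (hKF0nn : ∀ r ∈ Ioc (0 : ℝ) T, 0 ≤ K_F0 r)
    (hKF0i : IntegrableOn K_F0 (Ioc (0 : ℝ) T))
    (hGrow : ∀ t ∈ Ioc (0 : ℝ) T, ∀ z : E, ‖S t (F z)‖ ≤ K_F0 t * (1 + ‖z‖))
    (Y : ℝ → E)
    (hYm : AEStronglyMeasurable Y (volume.restrict (Ioc (0 : ℝ) T)))
    (B : ℝ) (hYb : ∀ t ∈ Icc (0 : ℝ) T, ‖Y t‖ ≤ B) :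
    ContinuousOn (fun t : ℝ => ∫ r in Ioc (0 : ℝ) t, S (t - r) (F (Y r)))
      (Icc (0 : ℝ) T) :=
  stmt_6_general T hT S hSadd hScont M hM F hF K_F0 hKF0nn hKF0i hGrow Y hYm B hYb
end

section
/- Let O ⊆ ℝ^d be a bounded open set, q ∈ [1,∞), θ ∈ (0,1) and ε ∈ (θ, 1]. Then there exists a constant C depending only on d, q, θ, ε and O such that for every bounded ε-Hölder continuous function h : O → ℝ and every measurable u : O → ℝ with ‖u‖_{W^{θ,q}(O)} < ∞, the pointwise product u·h satisfies ‖u·h‖_{W^{θ,q}(O)} ≤ C ‖h‖_{C^ε(O)} ‖u‖_{W^{θ,q}(O)}. -/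
open MeasureTheory Set Real

/-- The Sobolev–Slobodeckij norm
`‖u‖_{W^{θ,q}(O)} = (‖u‖_{L^q(O)}^q + ∫_O ∫_O |u(ξ)-u(η)|^q / |ξ-η|^{d+θq} dξ dη)^{1/q}`. -/
noncomputable def slobNorm (d : ℕ) (O : Set (EuclideanSpace ℝ (Fin d))) (q θ : ℝ)
    (u : EuclideanSpace ℝ (Fin d) → ℝ) : ℝ :=
  ((∫ ξ in O, |u ξ| ^ q) +
      ∫ η in O, ∫ ξ in O, |u ξ - u η| ^ q / ‖ξ - η‖ ^ ((d : ℝ) + θ * q)) ^ (1 / q)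

/-- The Hölder norm `‖h‖_{C^ε(O)} = sup_{ξ∈O} |h(ξ)| + sup_{ξ≠η∈O} |h(ξ)-h(η)|/|ξ-η|^ε`. -/
noncomputable def holderNorm (d : ℕ) (O : Set (EuclideanSpace ℝ (Fin d))) (ε : ℝ)
    (h : EuclideanSpace ℝ (Fin d) → ℝ) : ℝ :=
  sSup ((fun ξ => |h ξ|) '' O) +
    sSup ((fun p : EuclideanSpace ℝ (Fin d) × EuclideanSpace ℝ (Fin d) =>
        |h p.1 - h p.2| / ‖p.1 - p.2‖ ^ ε) '' {p | p.1 ∈ O ∧ p.2 ∈ O ∧ p.1 ≠ p.2})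

/-!
Split `u ξ h ξ - u η h η = (u ξ - u η) h ξ + u η (h ξ - h η)`. The first term is at most `sup |h|`
times the Gagliardo kernel of `u`; by Hölder continuity the second contributes at most the Hölder
constant times `|u η|^q ‖ξ - η‖^((ε - θ) q - d)`. As `(ε - θ) q > 0`, this Riesz kernel is
integrable over the bounded set `O` uniformly in `η`, so the second term costs only a multiple of
`‖u‖_{L^q}^q`.
-/

open Metric Module

lemma Real.rpow_add_le_mul_rpow_add_rpow {a b p : ℝ} (ha : 0 ≤ a) (hb : 0 ≤ b) (hp : 1 ≤ p) :
    (a + b) ^ p ≤ 2 ^ (p - 1) * (a ^ p + b ^ p) := by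
  lift a to NNReal using ha
  lift b to NNReal using hb
  exact_mod_cast NNReal.rpow_add_le_mul_rpow_add_rpow a b hp

lemma abs_mul_sub_mul_rpow_div_le {a b c e M D q θ ε n : ℝ} (hq : 1 ≤ q) (hD : 0 < D)
    (hc : |c| ≤ M) (hce : |c - e| ≤ M * D ^ ε) :
    |a * c - b * e| ^ q / D ^ (n + θ * q) ≤
      2 ^ (q - 1) * M ^ q * (|a - b| ^ q / D ^ (n + θ * q) + |b| ^ q * D ^ ((ε - θ) * q - n)) := by
  have hM : 0 ≤ M := (abs_nonneg c).trans hc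
  have hsplit : |a * c - b * e| ≤ M * |a - b| + M * |b| * D ^ ε :=
    calc |a * c - b * e| = |(a - b) * c + b * (c - e)| := by ring_nf
      _ ≤ |a - b| * |c| + |b| * |c - e| := by
          rw [← abs_mul, ← abs_mul]; exact abs_add_le _ _
      _ ≤ |a - b| * M + |b| * (M * D ^ ε) := by gcongr
      _ = M * |a - b| + M * |b| * D ^ ε := by ring
  have hpow : |a * c - b * e| ^ q ≤
      2 ^ (q - 1) * M ^ q * (|a - b| ^ q + |b| ^ q * D ^ (ε * q)) := by
    calc |a * c - b * e| ^ q ≤ (M * |a - b| + M * |b| * D ^ ε) ^ q := by gcongr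
      _ ≤ 2 ^ (q - 1) * ((M * |a - b|) ^ q + (M * |b| * D ^ ε) ^ q) :=
          rpow_add_le_mul_rpow_add_rpow (by positivity) (by positivity) hq
      _ = 2 ^ (q - 1) * M ^ q * (|a - b| ^ q + |b| ^ q * D ^ (ε * q)) := by
          rw [mul_rpow hM (abs_nonneg _), mul_rpow (by positivity) (by positivity),
            mul_rpow hM (abs_nonneg _), ← rpow_mul hD.le]
          ring
  have hexp : D ^ (ε * q) / D ^ (n + θ * q) = D ^ ((ε - θ) * q - n) := by
    rw [← rpow_sub hD]; ring_nf
  calc |a * c - b * e| ^ q / D ^ (n + θ * q)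
      ≤ 2 ^ (q - 1) * M ^ q * (|a - b| ^ q + |b| ^ q * D ^ (ε * q)) / D ^ (n + θ * q) := by
        gcongr
    _ = _ := by rw [← hexp]; ring

lemma preimage_sub_right_closedBall {E : Type*} [SeminormedAddCommGroup E] (η : E) (R : ℝ) :
    (· - η) ⁻¹' closedBall 0 R = closedBall η R := by
  ext ξ
  simp [dist_eq_norm]

section Translation

variable {E F : Type*} [NormedAddCommGroup E] [MeasurableSpace E] [BorelSpace E]
  [NormedAddCommGroup F] (μ : Measure E) [μ.IsAddRightInvariant]

lemma integrableOn_closedBall_comp_sub_right_iff {g : E → F} (η : E) (R : ℝ) :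
    IntegrableOn (fun ξ => g (ξ - η)) (closedBall η R) μ ↔ IntegrableOn g (closedBall 0 R) μ := by
  rw [← preimage_sub_right_closedBall]
  exact (measurePreserving_sub_right μ η).integrableOn_comp_preimage
    (MeasurableEquiv.subRight η).measurableEmbedding

lemma setIntegral_closedBall_comp_sub_right [NormedSpace ℝ F] (g : E → F) (η : E) (R : ℝ) :
    ∫ ξ in closedBall η R, g (ξ - η) ∂μ = ∫ x in closedBall 0 R, g x ∂μ := by
  rw [← preimage_sub_right_closedBall]
  exact (measurePreserving_sub_right μ η).setIntegral_preimage_emb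
    (MeasurableEquiv.subRight η).measurableEmbedding g _

end Translation

section RieszKernel

variable {E : Type*} [NormedAddCommGroup E] [NormedSpace ℝ E] [FiniteDimensional ℝ E]
  [MeasurableSpace E] [BorelSpace E] (μ : Measure E) [μ.IsAddHaarMeasure]

lemma locallyIntegrable_norm_rpow_sub_finrank {α : ℝ} (hα : 0 < α) :
    LocallyIntegrable (fun x : E => ‖x‖ ^ (α - finrank ℝ E)) μ := by
  by_cases hdα : (finrank ℝ E : ℝ) ≤ α
  · exact (continuous_norm.rpow_const fun _ => Or.inr (sub_nonneg.2 hdα)).locallyIntegrable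
  · have hd : 1 ≤ finrank ℝ E := by
      have : (0 : ℝ) < finrank ℝ E := by linarith
      exact_mod_cast this
    refine locallyIntegrable_of_norm_le_rpow hd (C := 1) (α := finrank ℝ E - α) (by linarith)
      (Filter.Eventually.of_forall fun x => ?_) (measurable_norm.pow_const _).aestronglyMeasurable
    rw [norm_of_nonneg (rpow_nonneg (norm_nonneg x) _), one_mul, neg_sub]

lemma exists_integral_norm_sub_rpow_le {s : Set E} (hs : Bornology.IsBounded s) {α : ℝ}
    (hα : 0 < α) :
    ∃ K, 0 ≤ K ∧ ∀ η ∈ s,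
      IntegrableOn (fun ξ => ‖ξ - η‖ ^ (α - finrank ℝ E)) s μ ∧
        ∫ ξ in s, ‖ξ - η‖ ^ (α - finrank ℝ E) ∂μ ≤ K := by
  set R := diam s
  refine ⟨∫ x in closedBall 0 R, ‖x‖ ^ (α - finrank ℝ E) ∂μ,
    setIntegral_nonneg measurableSet_closedBall fun x _ => rpow_nonneg (norm_nonneg x) _,
    fun η hη => ?_⟩
  have hsub : s ⊆ closedBall η R := fun ξ hξ => mem_closedBall.2 (dist_le_diam_of_mem hs hξ hη)
  have hball : IntegrableOn (fun ξ => ‖ξ - η‖ ^ (α - finrank ℝ E)) (closedBall η R) μ :=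
    (integrableOn_closedBall_comp_sub_right_iff μ η R).2
      ((locallyIntegrable_norm_rpow_sub_finrank μ hα).integrableOn_isCompact
        (isCompact_closedBall 0 R))
  refine ⟨hball.mono_set hsub, ?_⟩
  rw [← setIntegral_closedBall_comp_sub_right μ (fun x => ‖x‖ ^ (α - finrank ℝ E)) η R]
  exact setIntegral_mono_set hball
    (Filter.Eventually.of_forall fun ξ => rpow_nonneg (norm_nonneg _) _) hsub.eventuallyLE

end RieszKernel

section HolderNorm

variable {d : ℕ} {O : Set (EuclideanSpace ℝ (Fin d))} {ε : ℝ} {h : EuclideanSpace ℝ (Fin d) → ℝ}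

lemma sSup_abs_image_nonneg : 0 ≤ sSup ((fun ξ => |h ξ|) '' O) :=
  Real.sSup_nonneg (by rintro _ ⟨ξ, -, rfl⟩; positivity)

lemma sSup_holderQuotient_nonneg :
    0 ≤ sSup ((fun p : EuclideanSpace ℝ (Fin d) × EuclideanSpace ℝ (Fin d) =>
        |h p.1 - h p.2| / ‖p.1 - p.2‖ ^ ε) '' {p | p.1 ∈ O ∧ p.2 ∈ O ∧ p.1 ≠ p.2}) :=
  Real.sSup_nonneg (by rintro _ ⟨p, -, rfl⟩; positivity)

lemma holderNorm_nonneg : 0 ≤ holderNorm d O ε h :=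
  add_nonneg sSup_abs_image_nonneg sSup_holderQuotient_nonneg

lemma abs_le_holderNorm (hB : ∃ B, ∀ ξ ∈ O, |h ξ| ≤ B) {ξ} (hξ : ξ ∈ O) :
    |h ξ| ≤ holderNorm d O ε h := by
  obtain ⟨B, hB⟩ := hB
  have hbdd : BddAbove ((fun ξ => |h ξ|) '' O) := ⟨B, by rintro _ ⟨ζ, hζ, rfl⟩; exact hB ζ hζ⟩
  exact (le_csSup hbdd ⟨ξ, hξ, rfl⟩).trans (le_add_of_nonneg_right sSup_holderQuotient_nonneg)

lemma abs_sub_le_holderNorm_mul (hH : ∃ H, ∀ ξ ∈ O, ∀ η ∈ O, |h ξ - h η| ≤ H * ‖ξ - η‖ ^ ε)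
    {ξ η} (hξ : ξ ∈ O) (hη : η ∈ O) :
    |h ξ - h η| ≤ holderNorm d O ε h * ‖ξ - η‖ ^ ε := by
  obtain ⟨H, hH⟩ := hH
  rcases eq_or_ne ξ η with rfl | hne
  · simpa using mul_nonneg holderNorm_nonneg (rpow_nonneg (norm_nonneg (ξ - ξ)) ε)
  have hD : 0 < ‖ξ - η‖ ^ ε := rpow_pos_of_pos (norm_pos_iff.2 (sub_ne_zero.2 hne)) ε
  have hbdd : BddAbove ((fun p : EuclideanSpace ℝ (Fin d) × EuclideanSpace ℝ (Fin d) =>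
      |h p.1 - h p.2| / ‖p.1 - p.2‖ ^ ε) '' {p | p.1 ∈ O ∧ p.2 ∈ O ∧ p.1 ≠ p.2}) := by
    refine ⟨H, ?_⟩
    rintro _ ⟨p, ⟨hp₁, hp₂, hp⟩, rfl⟩
    rw [div_le_iff₀ (rpow_pos_of_pos (norm_pos_iff.2 (sub_ne_zero.2 hp)) ε)]
    exact hH _ hp₁ _ hp₂
  have hquot := le_csSup hbdd ⟨(ξ, η), ⟨hξ, hη, hne⟩, rfl⟩
  rw [← div_le_iff₀ hD]
  exact hquot.trans (le_add_of_nonneg_left sSup_abs_image_nonneg)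

end HolderNorm

lemma rpow_one_div_le_of_le_mul_rpow {x y C M q : ℝ} (hq : 0 < q) (hx : 0 ≤ x) (hy : 0 ≤ y)
    (hC : 0 ≤ C) (hM : 0 ≤ M) (h : x ≤ C * M ^ q * y) :
    x ^ (1 / q) ≤ C ^ (1 / q) * M * y ^ (1 / q) :=
  calc x ^ (1 / q) ≤ (C * M ^ q * y) ^ (1 / q) := rpow_le_rpow hx h (by positivity)
    _ = C ^ (1 / q) * M * y ^ (1 / q) := by
        rw [mul_rpow (by positivity) hy, mul_rpow hC (by positivity), ← rpow_mul hM,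
          mul_one_div_cancel hq.ne', rpow_one]

noncomputable def gagliardoIntegral (d : ℕ) (O : Set (EuclideanSpace ℝ (Fin d))) (q θ : ℝ)
    (u : EuclideanSpace ℝ (Fin d) → ℝ) : ℝ :=
  ∫ η in O, ∫ ξ in O, |u ξ - u η| ^ q / ‖ξ - η‖ ^ ((d : ℝ) + θ * q)

section Slobodeckij

variable {d : ℕ} {O : Set (EuclideanSpace ℝ (Fin d))} {q θ ε M K : ℝ}
  {u h : EuclideanSpace ℝ (Fin d) → ℝ}

lemma slobNorm_eq :
    slobNorm d O q θ u = ((∫ ξ in O, |u ξ| ^ q) + gagliardoIntegral d O q θ u) ^ (1 / q) :=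
  rfl

lemma gagliardoIntegral_nonneg : 0 ≤ gagliardoIntegral d O q θ u :=
  integral_nonneg fun _ => integral_nonneg fun _ => by positivity

lemma setIntegral_abs_mul_rpow_le (hO : MeasurableSet O) (hq : 0 ≤ q)
    (hM : ∀ ξ ∈ O, |h ξ| ≤ M) (hu : IntegrableOn (fun ξ => |u ξ| ^ q) O) :
    ∫ ξ in O, |u ξ * h ξ| ^ q ≤ M ^ q * ∫ ξ in O, |u ξ| ^ q := by
  rw [← integral_const_mul]
  refine integral_mono_of_nonneg (Filter.Eventually.of_forall fun _ => by positivity)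
    (hu.const_mul _) ?_
  filter_upwards [ae_restrict_mem hO] with ξ hξ
  rw [abs_mul, mul_rpow (abs_nonneg _) (abs_nonneg _), mul_comm (M ^ q)]
  gcongr
  exact hM ξ hξ

lemma abs_mul_sub_mul_rpow_div_norm_le (hq : 1 ≤ q) (hM : ∀ ξ ∈ O, |h ξ| ≤ M)
    (hH : ∀ ξ ∈ O, ∀ η ∈ O, |h ξ - h η| ≤ M * ‖ξ - η‖ ^ ε) {ξ η} (hξ : ξ ∈ O) (hη : η ∈ O) :
    |u ξ * h ξ - u η * h η| ^ q / ‖ξ - η‖ ^ ((d : ℝ) + θ * q) ≤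
      2 ^ (q - 1) * M ^ q * (|u ξ - u η| ^ q / ‖ξ - η‖ ^ ((d : ℝ) + θ * q) +
        |u η| ^ q * ‖ξ - η‖ ^ ((ε - θ) * q - d)) := by
  rcases eq_or_ne ξ η with rfl | hne
  · have hM0 : 0 ≤ M := (abs_nonneg _).trans (hM ξ hξ)
    rw [sub_self, abs_zero, zero_rpow (by linarith), zero_div]
    positivity
  exact abs_mul_sub_mul_rpow_div_le hq (norm_pos_iff.2 (sub_ne_zero.2 hne)) (hM ξ hξ)
    (hH ξ hξ η hη)

lemma gagliardoIntegral_mul_le (hO : MeasurableSet O) (hq : 1 ≤ q)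
    (hM : ∀ ξ ∈ O, |h ξ| ≤ M) (hH : ∀ ξ ∈ O, ∀ η ∈ O, |h ξ - h η| ≤ M * ‖ξ - η‖ ^ ε)
    (hK : ∀ η ∈ O, IntegrableOn (fun ξ => ‖ξ - η‖ ^ ((ε - θ) * q - d)) O ∧
      ∫ ξ in O, ‖ξ - η‖ ^ ((ε - θ) * q - d) ≤ K)
    (hu : IntegrableOn (fun ξ => |u ξ| ^ q) O)
    (hu' : IntegrableOn (fun p : EuclideanSpace ℝ (Fin d) × EuclideanSpace ℝ (Fin d) =>
      |u p.1 - u p.2| ^ q / ‖p.1 - p.2‖ ^ ((d : ℝ) + θ * q)) (O ×ˢ O)) :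
    gagliardoIntegral d O q θ (fun ξ => u ξ * h ξ) ≤
      2 ^ (q - 1) * M ^ q * (gagliardoIntegral d O q θ u + K * ∫ ξ in O, |u ξ| ^ q) := by
  set f := fun p : EuclideanSpace ℝ (Fin d) × EuclideanSpace ℝ (Fin d) =>
    |u p.1 - u p.2| ^ q / ‖p.1 - p.2‖ ^ ((d : ℝ) + θ * q)
  have hf : Integrable f ((volume.restrict O).prod (volume.restrict O)) := by
    rwa [Measure.prod_restrict, ← Measure.volume_eq_prod]
  have hinner : ∀ᵐ η ∂volume.restrict O,
      ∫ ξ in O, |u ξ * h ξ - u η * h η| ^ q / ‖ξ - η‖ ^ ((d : ℝ) + θ * q) ≤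
        2 ^ (q - 1) * M ^ q * ((∫ ξ in O, f (ξ, η)) + |u η| ^ q * K) := by
    filter_upwards [hf.prod_left_ae, ae_restrict_mem hO] with η hfη hη
    obtain ⟨hkernel, hkernel_le⟩ := hK η hη
    have hM0 : 0 ≤ M := (abs_nonneg _).trans (hM η hη)
    calc ∫ ξ in O, |u ξ * h ξ - u η * h η| ^ q / ‖ξ - η‖ ^ ((d : ℝ) + θ * q)
        ≤ ∫ ξ in O, 2 ^ (q - 1) * M ^ q *
            (f (ξ, η) + |u η| ^ q * ‖ξ - η‖ ^ ((ε - θ) * q - d)) := by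
          refine integral_mono_of_nonneg (Filter.Eventually.of_forall fun _ => by positivity)
            ((hfη.add (hkernel.const_mul _)).const_mul _) ?_
          filter_upwards [ae_restrict_mem hO] with ξ hξ
          exact abs_mul_sub_mul_rpow_div_norm_le hq hM hH hξ hη
      _ = 2 ^ (q - 1) * M ^ q * ((∫ ξ in O, f (ξ, η)) +
            |u η| ^ q * ∫ ξ in O, ‖ξ - η‖ ^ ((ε - θ) * q - d)) := by
          rw [integral_const_mul, integral_add hfη (hkernel.const_mul _), integral_const_mul]
      _ ≤ 2 ^ (q - 1) * M ^ q * ((∫ ξ in O, f (ξ, η)) + |u η| ^ q * K) := by gcongr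
  calc gagliardoIntegral d O q θ (fun ξ => u ξ * h ξ)
      ≤ ∫ η in O, 2 ^ (q - 1) * M ^ q * ((∫ ξ in O, f (ξ, η)) + |u η| ^ q * K) :=
        integral_mono_of_nonneg
          (Filter.Eventually.of_forall fun _ => integral_nonneg fun _ => by positivity)
          ((hf.integral_prod_right.add (hu.mul_const K)).const_mul _) hinner
    _ = 2 ^ (q - 1) * M ^ q * (gagliardoIntegral d O q θ u + K * ∫ ξ in O, |u ξ| ^ q) := by
        rw [integral_const_mul, integral_add hf.integral_prod_right (hu.mul_const K),
          integral_mul_const, mul_comm K]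
        rfl

lemma slobNorm_mul_le (hO : MeasurableSet O) (hq : 1 ≤ q) (hM0 : 0 ≤ M)
    (hM : ∀ ξ ∈ O, |h ξ| ≤ M) (hH : ∀ ξ ∈ O, ∀ η ∈ O, |h ξ - h η| ≤ M * ‖ξ - η‖ ^ ε)
    (hK0 : 0 ≤ K)
    (hK : ∀ η ∈ O, IntegrableOn (fun ξ => ‖ξ - η‖ ^ ((ε - θ) * q - d)) O ∧
      ∫ ξ in O, ‖ξ - η‖ ^ ((ε - θ) * q - d) ≤ K)
    (hu : IntegrableOn (fun ξ => |u ξ| ^ q) O)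
    (hu' : IntegrableOn (fun p : EuclideanSpace ℝ (Fin d) × EuclideanSpace ℝ (Fin d) =>
      |u p.1 - u p.2| ^ q / ‖p.1 - p.2‖ ^ ((d : ℝ) + θ * q)) (O ×ˢ O)) :
    slobNorm d O q θ (fun ξ => u ξ * h ξ) ≤
      (2 ^ (q - 1) * (1 + K)) ^ (1 / q) * M * slobNorm d O q θ u := by
  set I := ∫ ξ in O, |u ξ| ^ q
  set J := gagliardoIntegral d O q θ u
  have hI : 0 ≤ I := integral_nonneg fun _ => by positivity
  have hJ : 0 ≤ J := gagliardoIntegral_nonneg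
  have hMq : 0 ≤ M ^ q := by positivity
  have h2 : 1 ≤ (2 : ℝ) ^ (q - 1) := one_le_rpow one_le_two (by linarith)
  have hLq := setIntegral_abs_mul_rpow_le hO (by linarith) hM hu
  have hgag := gagliardoIntegral_mul_le hO hq hM hH hK hu hu'
  rw [slobNorm_eq, slobNorm_eq]
  refine rpow_one_div_le_of_le_mul_rpow (by linarith)
    (add_nonneg (integral_nonneg fun _ => by positivity) gagliardoIntegral_nonneg)
    (add_nonneg hI hJ) (by positivity) hM0 ?_
  have hMqI : M ^ q * I ≤ 2 ^ (q - 1) * M ^ q * I := by nlinarith [mul_nonneg hMq hI]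
  nlinarith [mul_nonneg (mul_nonneg (by positivity : (0 : ℝ) ≤ 2 ^ (q - 1) * M ^ q) hK0) hJ]

end Slobodeckij

theorem stmt_10_general
    (d : ℕ) (O : Set (EuclideanSpace ℝ (Fin d)))
    (hOo : IsOpen O) (hOb : Bornology.IsBounded O)
    (q θ ε : ℝ) (hq : 1 ≤ q) (hε : ε ∈ Ioc θ 1) :
    ∃ C : ℝ, 0 ≤ C ∧
      ∀ h u : EuclideanSpace ℝ (Fin d) → ℝ,
        -- `h` is bounded on `O`
        (∃ B : ℝ, ∀ ξ ∈ O, |h ξ| ≤ B) →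
        -- `h` is `ε`-Hölder continuous on `O`
        (∃ H : ℝ, ∀ ξ ∈ O, ∀ η ∈ O, |h ξ - h η| ≤ H * ‖ξ - η‖ ^ ε) →
        -- `u` is measurable with `‖u‖_{W^{θ,q}(O)} < ∞`
        Measurable u →
        IntegrableOn (fun ξ => |u ξ| ^ q) O →
        IntegrableOn
          (fun p : EuclideanSpace ℝ (Fin d) × EuclideanSpace ℝ (Fin d) =>
            |u p.1 - u p.2| ^ q / ‖p.1 - p.2‖ ^ ((d : ℝ) + θ * q)) (O ×ˢ O) →
        slobNorm d O q θ (fun ξ => u ξ * h ξ) ≤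
          C * holderNorm d O ε h * slobNorm d O q θ u := by
  obtain ⟨K, hK0, hK⟩ := exists_integral_norm_sub_rpow_le volume hOb (α := (ε - θ) * q)
    (mul_pos (sub_pos.2 hε.1) (by linarith))
  rw [finrank_euclideanSpace_fin] at hK
  refine ⟨(2 ^ (q - 1) * (1 + K)) ^ (1 / q), by positivity, ?_⟩
  intro h u hB hH _ hu hu'
  exact slobNorm_mul_le hOo.measurableSet hq holderNorm_nonneg
    (fun ξ hξ => abs_le_holderNorm hB hξ) (fun ξ hξ η hη => abs_sub_le_holderNorm_mul hH hξ hη)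
    hK0 hK hu hu'

/-- Product estimate in Sobolev–Slobodeckij spaces: for a bounded
open `O ⊆ ℝ^d`, `θ ∈ (0,1)` and `ε ∈ (θ,1]`, there is `C = C(d,q,θ,ε,O)` such that
`‖u·h‖_{W^{θ,q}(O)} ≤ C ‖h‖_{C^ε(O)} ‖u‖_{W^{θ,q}(O)}` for every bounded `ε`-Hölder
continuous `h` and every measurable `u` with finite `W^{θ,q}(O)`-norm. -/
theorem stmt_10
    (d : ℕ) (O : Set (EuclideanSpace ℝ (Fin d)))
    (hOo : IsOpen O) (hOb : Bornology.IsBounded O)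
    (q θ ε : ℝ) (hq : 1 ≤ q) (hθ : θ ∈ Ioo (0 : ℝ) 1) (hε : ε ∈ Ioc θ 1) :
    ∃ C : ℝ, 0 ≤ C ∧
      ∀ h u : EuclideanSpace ℝ (Fin d) → ℝ,
        -- `h` is bounded on `O`
        (∃ B : ℝ, ∀ ξ ∈ O, |h ξ| ≤ B) →
        -- `h` is `ε`-Hölder continuous on `O`
        (∃ H : ℝ, ∀ ξ ∈ O, ∀ η ∈ O, |h ξ - h η| ≤ H * ‖ξ - η‖ ^ ε) →
        -- `u` is measurable with `‖u‖_{W^{θ,q}(O)} < ∞`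
        Measurable u →
        IntegrableOn (fun ξ => |u ξ| ^ q) O →
        IntegrableOn
          (fun p : EuclideanSpace ℝ (Fin d) × EuclideanSpace ℝ (Fin d) =>
            |u p.1 - u p.2| ^ q / ‖p.1 - p.2‖ ^ ((d : ℝ) + θ * q)) (O ×ˢ O) →
        slobNorm d O q θ (fun ξ => u ξ * h ξ) ≤
          C * holderNorm d O ε h * slobNorm d O q θ u :=
  stmt_10_general d O hOo hOb q θ ε hq hε
end
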